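/- arXiv:2308.11089 — 2 statements merged into one kernel-verified Lean document; each statement's English description precedes it below -/
import Mathlib

section
/- Tensor-product additivity of UDA states with one pure factor: let α = |ψ⟩⟨ψ| be a pure k-UDA state on H_{A_1} ⊗ ... ⊗ H_{A_m} and β a (possibly mixed) k-UDA state on H_{B_1} ⊗ ... ⊗ H_{B_n}. Then the (m+n)-partite state α ⊗ β on H_{A_1} ⊗ ... ⊗ H_{A_m} ⊗ H_{B_1} ⊗ ... ⊗ H_{B_n} is k-UDA: any (m+n)-partite density operator sharing all k-partite marginals of α ⊗ β equals α ⊗ β. -/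
open scoped BigOperators ComplexOrder

abbrev Idx {ι : Type} (κ : ι → Type) : Type := ∀ i, κ i

def IsDensity {α : Type} [Fintype α] (M : Matrix α α ℂ) : Prop :=
  M.PosSemidef ∧ M.trace = 1

def pureState {α : Type} (ψ : α → ℂ) : Matrix α α ℂ :=
  fun a b => ψ a * star (ψ b)

noncomputable def ptrace {ι : Type} [Fintype ι] [DecidableEq ι] (κ : ι → Type)
    [∀ i, Fintype (κ i)] (S : Finset ι) (M : Matrix (Idx κ) (Idx κ) ℂ) :
    Matrix (∀ i : {i // i ∈ S}, κ i) (∀ i : {i // i ∈ S}, κ i) ℂ :=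
  fun a b => ∑ c : ∀ i : {i // i ∉ S}, κ i,
    M (fun i => if h : i ∈ S then a ⟨i, h⟩ else c ⟨i, h⟩)
      (fun i => if h : i ∈ S then b ⟨i, h⟩ else c ⟨i, h⟩)

def IsUDA {ι : Type} [Fintype ι] [DecidableEq ι] (κ : ι → Type)
    [∀ i, Fintype (κ i)] (k : ℕ) (ρ : Matrix (Idx κ) (Idx κ) ℂ) : Prop :=
  ∀ σ : Matrix (Idx κ) (Idx κ) ℂ, IsDensity σ →
    (∀ S : Finset ι, S.card = k → ptrace κ S σ = ptrace κ S ρ) → σ = ρ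

instance sumElimFintype {ι₁ ι₂ : Type} {κ₁ : ι₁ → Type} {κ₂ : ι₂ → Type}
    [∀ i, Fintype (κ₁ i)] [∀ i, Fintype (κ₂ i)] :
    ∀ i, Fintype (Sum.elim κ₁ κ₂ i)
  | .inl i => inferInstanceAs (Fintype (κ₁ i))
  | .inr i => inferInstanceAs (Fintype (κ₂ i))

def tensProd {ι₁ ι₂ : Type} {κ₁ : ι₁ → Type} {κ₂ : ι₂ → Type}
    (ρ : Matrix (Idx κ₁) (Idx κ₁) ℂ) (σ : Matrix (Idx κ₂) (Idx κ₂) ℂ) :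
    Matrix (Idx (Sum.elim κ₁ κ₂)) (Idx (Sum.elim κ₁ κ₂)) ℂ :=
  fun a b => ρ (fun i => a (.inl i)) (fun i => b (.inl i)) *
             σ (fun i => a (.inr i)) (fun i => b (.inr i))

/-!
Identify the index space of the `m + n` parties with the product of the `A`- and `B`-index spaces;
then `tensProd` is the Kronecker product, and a `k`-marginal of `σ` on `A`-parties (`B`-parties)
is a `k`-marginal of its partial trace over `B` (over `A`). So `tr_B σ` has the `k`-marginals of
`α` and equals `|ψ⟩⟨ψ|`. For the projection `P = |ψ⟩⟨ψ| ⊗ 1` this gives `tr (σ P) = tr σ`,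
which for positive `σ` forces `σ = P σ P = |ψ⟩⟨ψ| ⊗ γ` with `γ = tr_A σ`. Then `γ` has the
`k`-marginals of `β`, so `γ = β`.
-/

open scoped Kronecker

namespace Matrix

variable {m n R : Type*}

section AddCommMonoid
variable [AddCommMonoid R]

def traceRight [Fintype n] (M : Matrix (m × n) (m × n) R) : Matrix m m R :=
  of fun i j => ∑ k, M (i, k) (j, k)

def traceLeft [Fintype m] (M : Matrix (m × n) (m × n) R) : Matrix n n R :=
  of fun k l => ∑ i, M (i, k) (i, l)

theorem traceRight_eq_sum_submatrix [Fintype n] (M : Matrix (m × n) (m × n) R) :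
    traceRight M = ∑ k, M.submatrix (·, k) (·, k) := by
  ext i j
  simp [traceRight, sum_apply]

theorem traceLeft_eq_sum_submatrix [Fintype m] (M : Matrix (m × n) (m × n) R) :
    traceLeft M = ∑ i, M.submatrix (i, ·) (i, ·) := by
  ext k l
  simp [traceLeft, sum_apply]

@[simp]
theorem trace_traceRight [Fintype m] [Fintype n] (M : Matrix (m × n) (m × n) R) :
    (traceRight M).trace = M.trace := by
  simp [traceRight, trace, Fintype.sum_prod_type]

@[simp]
theorem trace_traceLeft [Fintype m] [Fintype n] (M : Matrix (m × n) (m × n) R) :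
    (traceLeft M).trace = M.trace := by
  simp [traceLeft, trace, Fintype.sum_prod_type, Finset.sum_comm (γ := m)]

@[simp]
theorem trace_reindex [Fintype m] [Fintype n] (e : m ≃ n) (M : Matrix m m R) :
    (reindex e e M).trace = M.trace :=
  e.symm.sum_comp fun i => M i i

end AddCommMonoid

theorem traceRight_kronecker [Fintype n] [CommSemiring R] (A : Matrix m m R)
    (B : Matrix n n R) :
    traceRight (A ⊗ₖ B) = B.trace • A := by
  ext i j
  simp [traceRight, trace, Finset.mul_sum, mul_comm]

theorem traceLeft_kronecker [Fintype m] [CommSemiring R] (A : Matrix m m R) (B : Matrix n n R) :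
    traceLeft (A ⊗ₖ B) = A.trace • B := by
  ext k l
  simp [traceLeft, trace, Finset.sum_mul]

theorem PosSemidef.traceRight [Fintype n] [Ring R] [PartialOrder R] [StarRing R] [AddLeftMono R]
    {M : Matrix (m × n) (m × n) R} (hM : M.PosSemidef) : (traceRight M).PosSemidef := by
  rw [traceRight_eq_sum_submatrix]
  exact posSemidef_sum _ fun k _ => hM.submatrix _

theorem PosSemidef.traceLeft [Fintype m] [Ring R] [PartialOrder R] [StarRing R] [AddLeftMono R]
    {M : Matrix (m × n) (m × n) R} (hM : M.PosSemidef) : (traceLeft M).PosSemidef := by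
  rw [traceLeft_eq_sum_submatrix]
  exact posSemidef_sum _ fun k _ => hM.submatrix _

theorem trace_mul_kronecker_one [Fintype m] [Fintype n] [CommSemiring R] [DecidableEq n]
    (M : Matrix (m × n) (m × n) R) (A : Matrix m m R) :
    (M * (A ⊗ₖ 1)).trace = (traceRight M * A).trace := by
  simp only [trace, diag_apply, mul_apply, kroneckerMap_apply, one_apply, mul_ite, mul_one,
    mul_zero, Fintype.sum_prod_type, Finset.sum_ite_eq', Finset.mem_univ, ↓reduceIte, traceRight,
    of_apply, Finset.sum_mul]
  exact Finset.sum_congr rfl fun _ _ => Finset.sum_comm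

theorem vecMulVec_kronecker_one_mul_mul [Fintype m] [Fintype n] [CommSemiring R]
    [DecidableEq n] (u v w x : m → R) (M : Matrix (m × n) (m × n) R) :
    (vecMulVec u v ⊗ₖ 1) * M * (vecMulVec w x ⊗ₖ 1) =
      vecMulVec u x ⊗ₖ of fun c d => ∑ a, ∑ b, v a * M (a, c) (b, d) * w b := by
  ext ⟨a, c⟩ ⟨b, d⟩
  simp only [mul_apply, kroneckerMap_apply, vecMulVec_apply, one_apply, mul_ite, mul_one, mul_zero,
    ite_mul, zero_mul, Fintype.sum_prod_type, Finset.sum_ite_eq, Finset.mem_univ, ↓reduceIte,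
    Finset.sum_mul, Finset.sum_ite_eq', of_apply, Finset.mul_sum]
  rw [Finset.sum_comm]
  exact Finset.sum_congr rfl fun _ _ => Finset.sum_congr rfl fun _ _ => by ring

theorem PosSemidef.mul_eq_self_of_trace_mul_eq {𝕜 : Type*} [RCLike 𝕜] [Fintype n]
    {σ P : Matrix n n 𝕜} (hσ : σ.PosSemidef) (hP : P.IsHermitian) (hPP : IsIdempotentElem P)
    (htr : (σ * P).trace = σ.trace) : σ * P = σ := by
  classical
  open scoped MatrixOrder in
  obtain ⟨B, rfl⟩ := CStarAlgebra.nonneg_iff_eq_star_mul_self.mp hσ.nonneg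
  rw [star_eq_conjTranspose] at htr ⊢
  -- `‖B P - B‖² = tr σ - tr (σ P)` for `σ = Bᴴ B`
  have hBP : B * P = B := by
    rw [← sub_eq_zero, ← trace_conjTranspose_mul_self_eq_zero_iff]
    calc ((B * P - B)ᴴ * (B * P - B)).trace
        = (P * (Bᴴ * B) * P).trace - (P * (Bᴴ * B)).trace - (Bᴴ * B * P).trace
            + (Bᴴ * B).trace := by
          rw [conjTranspose_sub, conjTranspose_mul, hP.eq, ← trace_sub, ← trace_sub,
            ← trace_add]
          congr 1
          noncomm_ring
      _ = 0 := by
          rw [trace_mul_cycle, hPP.eq, trace_mul_comm P, htr]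
          ring
  rw [mul_assoc, hBP]

theorem IsHermitian.kronecker [CommSemiring R] [StarRing R] {A : Matrix m m R}
    {B : Matrix n n R} (hA : A.IsHermitian) (hB : B.IsHermitian) : (A ⊗ₖ B).IsHermitian := by
  rw [IsHermitian, conjTranspose_kronecker, hA.eq, hB.eq]

theorem PosSemidef.eq_vecMulVec_kronecker_traceLeft {𝕜 : Type*} [RCLike 𝕜] [Fintype m]
    [Fintype n] {σ : Matrix (m × n) (m × n) 𝕜} (hσ : σ.PosSemidef) {ψ : m → 𝕜}
    (hψ : ψ ⬝ᵥ star ψ = 1) (hσψ : σ.traceRight = vecMulVec ψ (star ψ)) :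
    σ = vecMulVec ψ (star ψ) ⊗ₖ σ.traceLeft := by
  classical
  set ρ := vecMulVec ψ (star ψ)
  have htrρ : ρ.trace = 1 := by rw [trace_vecMulVec, hψ]
  have hρ : IsIdempotentElem ρ := by
    rw [IsIdempotentElem, vecMulVec_mul_vecMulVec, dotProduct_comm, hψ, one_smul]
  set P := ρ ⊗ₖ (1 : Matrix n n 𝕜)
  have hP : P.IsHermitian :=
    (posSemidef_vecMulVec_self_star ψ).isHermitian.kronecker isHermitian_one
  have hPP : IsIdempotentElem P := by
    rw [IsIdempotentElem, ← mul_kronecker_mul, hρ.eq, mul_one]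
  have hσP : σ * P = σ := hσ.mul_eq_self_of_trace_mul_eq hP hPP <| by
    rw [trace_mul_kronecker_one, hσψ, hρ.eq, ← trace_traceRight, hσψ]
  have hPσ : P * σ = σ := by
    simpa only [conjTranspose_mul, hP.eq, hσ.isHermitian.eq] using congrArg Matrix.conjTranspose hσP
  have hσρ : σ = ρ ⊗ₖ of fun c d => ∑ a, ∑ b, star ψ a * σ (a, c) (b, d) * ψ b :=
    calc σ = P * σ * P := by rw [mul_assoc, hσP, hPσ]
      _ = _ := vecMulVec_kronecker_one_mul_mul ψ (star ψ) ψ (star ψ) σ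
  conv_rhs => rw [hσρ, traceLeft_kronecker, htrρ, one_smul]
  exact hσρ

end Matrix

open Matrix

section SumIndex

variable {ι₁ ι₂ : Type} {κ₁ : ι₁ → Type} {κ₂ : ι₂ → Type}

def idxSumEquiv : Idx (Sum.elim κ₁ κ₂) ≃ Idx κ₁ × Idx κ₂ :=
  Equiv.sumPiEquivProdPi _

theorem reindex_tensProd (ρ : Matrix (Idx κ₁) (Idx κ₁) ℂ)
    (τ : Matrix (Idx κ₂) (Idx κ₂) ℂ) :
    reindex idxSumEquiv idxSumEquiv (tensProd ρ τ) = ρ ⊗ₖ τ := rfl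

def mergeOn {ι : Type} {κ : ι → Type} [DecidableEq ι] (S : Finset ι)
    (a : ∀ i : {i // i ∈ S}, κ i) (c : ∀ i : {i // i ∉ S}, κ i) : Idx κ :=
  fun i => if h : i ∈ S then a ⟨i, h⟩ else c ⟨i, h⟩

theorem ptrace_apply {ι : Type} [Fintype ι] [DecidableEq ι] (κ : ι → Type)
    [∀ i, Fintype (κ i)] (S : Finset ι) (M : Matrix (Idx κ) (Idx κ) ℂ)
    (a b : ∀ i : {i // i ∈ S}, κ i) :
    ptrace κ S M a b = ∑ c, M (mergeOn S a c) (mergeOn S b c) := rfl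

def liftInl (S : Finset ι₁) (a : ∀ j : {j // j ∈ S}, κ₁ j) :
    ∀ i : {i // i ∈ S.map .inl}, Sum.elim κ₁ κ₂ i.1
  | ⟨.inl j, h⟩ => a ⟨j, by simpa using h⟩
  | ⟨.inr _, h⟩ => absurd h (by simp)

def liftInr (T : Finset ι₂) (b : ∀ j : {j // j ∈ T}, κ₂ j) :
    ∀ i : {i // i ∈ T.map .inr}, Sum.elim κ₁ κ₂ i.1
  | ⟨.inl _, h⟩ => absurd h (by simp)
  | ⟨.inr j, h⟩ => b ⟨j, by simpa using h⟩

def complMapInlEquiv (S : Finset ι₁) :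
    ((∀ j : {j // j ∉ S}, κ₁ j) × Idx κ₂) ≃
      ∀ i : {i // i ∉ S.map .inl}, Sum.elim κ₁ κ₂ i.1 where
  toFun p
    | ⟨.inl j, h⟩ => p.1 ⟨j, by simpa using h⟩
    | ⟨.inr j, _⟩ => p.2 j
  invFun c := (fun j => c ⟨.inl j.1, by simpa using j.2⟩, fun j => c ⟨.inr j, by simp⟩)
  right_inv c := by ext ⟨i | i, h⟩ <;> rfl

def complMapInrEquiv (T : Finset ι₂) :
    (Idx κ₁ × ∀ j : {j // j ∉ T}, κ₂ j) ≃
      ∀ i : {i // i ∉ T.map .inr}, Sum.elim κ₁ κ₂ i.1 where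
  toFun p
    | ⟨.inl j, _⟩ => p.1 j
    | ⟨.inr j, h⟩ => p.2 ⟨j, by simpa using h⟩
  invFun c := (fun j => c ⟨.inl j, by simp⟩, fun j => c ⟨.inr j.1, by simpa using j.2⟩)
  right_inv c := by ext ⟨i | i, h⟩ <;> rfl

theorem idxSumEquiv_symm_mergeOn_inl [DecidableEq ι₁] [DecidableEq ι₂] (S : Finset ι₁)
    (a : ∀ j : {j // j ∈ S}, κ₁ j) (c : ∀ j : {j // j ∉ S}, κ₁ j) (d : Idx κ₂) :
    idxSumEquiv.symm (mergeOn S a c, d) =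
      mergeOn (S.map .inl) (liftInl S a) (complMapInlEquiv S (c, d)) := by
  ext (i | i)
  · by_cases hi : i ∈ S <;>
      simp [mergeOn, hi, idxSumEquiv, Equiv.sumPiEquivProdPi, liftInl, complMapInlEquiv]
  · simp [mergeOn, idxSumEquiv, Equiv.sumPiEquivProdPi, complMapInlEquiv]

theorem idxSumEquiv_symm_mergeOn_inr [DecidableEq ι₁] [DecidableEq ι₂] (T : Finset ι₂)
    (a : Idx κ₁) (b : ∀ j : {j // j ∈ T}, κ₂ j) (d : ∀ j : {j // j ∉ T}, κ₂ j) :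
    idxSumEquiv.symm (a, mergeOn T b d) =
      mergeOn (T.map .inr) (liftInr T b) (complMapInrEquiv T (a, d)) := by
  ext (i | i)
  · simp [mergeOn, idxSumEquiv, Equiv.sumPiEquivProdPi, complMapInrEquiv]
  · by_cases hi : i ∈ T <;>
      simp [mergeOn, hi, idxSumEquiv, Equiv.sumPiEquivProdPi, liftInr, complMapInrEquiv]

variable [Fintype ι₁] [Fintype ι₂] [DecidableEq ι₁] [DecidableEq ι₂]
  [∀ i, Fintype (κ₁ i)] [∀ i, Fintype (κ₂ i)]

theorem ptrace_traceRight_reindex (S : Finset ι₁)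
    (M : Matrix (Idx (Sum.elim κ₁ κ₂)) (Idx (Sum.elim κ₁ κ₂)) ℂ) :
    ptrace κ₁ S (traceRight (reindex idxSumEquiv idxSumEquiv M)) =
      (ptrace (Sum.elim κ₁ κ₂) (S.map .inl) M).submatrix (liftInl S) (liftInl S) := by
  ext a b
  simp only [ptrace_apply, submatrix_apply, traceRight, reindex_apply, of_apply]
  rw [eq_comm, ← (complMapInlEquiv S).sum_comp, Fintype.sum_prod_type]
  simp only [idxSumEquiv_symm_mergeOn_inl]

theorem ptrace_traceLeft_reindex (T : Finset ι₂)
    (M : Matrix (Idx (Sum.elim κ₁ κ₂)) (Idx (Sum.elim κ₁ κ₂)) ℂ) :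
    ptrace κ₂ T (traceLeft (reindex idxSumEquiv idxSumEquiv M)) =
      (ptrace (Sum.elim κ₁ κ₂) (T.map .inr) M).submatrix (liftInr T) (liftInr T) := by
  ext a b
  simp only [ptrace_apply, submatrix_apply, traceLeft, reindex_apply, of_apply]
  rw [eq_comm, ← (complMapInrEquiv T).sum_comp, Fintype.sum_prod_type, Finset.sum_comm]
  simp only [idxSumEquiv_symm_mergeOn_inr]

end SumIndex

theorem IsDensity.traceRight {m n : Type} [Fintype m] [Fintype n]
    {M : Matrix (m × n) (m × n) ℂ} (hM : IsDensity M) : IsDensity (traceRight M) :=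
  ⟨hM.1.traceRight, by rw [trace_traceRight, hM.2]⟩

theorem IsDensity.traceLeft {m n : Type} [Fintype m] [Fintype n]
    {M : Matrix (m × n) (m × n) ℂ} (hM : IsDensity M) : IsDensity (traceLeft M) :=
  ⟨hM.1.traceLeft, by rw [trace_traceLeft, hM.2]⟩

theorem IsDensity.reindex {m n : Type} [Fintype m] [Fintype n] (e : m ≃ n)
    {M : Matrix m m ℂ} (hM : IsDensity M) : IsDensity (reindex e e M) :=
  ⟨hM.1.submatrix _, by rw [trace_reindex, hM.2]⟩

theorem tensor_additivity_pure_factor {m n : ℕ}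
    (κA : Fin m → Type) (κB : Fin n → Type)
    [∀ i, Fintype (κA i)] [∀ i, Fintype (κB i)] (k : ℕ)
    (ψ : Idx κA → ℂ) (hψ : ∑ a, ψ a * star (ψ a) = 1)
    (hαUDA : IsUDA κA k (pureState ψ))
    (β : Matrix (Idx κB) (Idx κB) ℂ) (hβ : IsDensity β)
    (hβUDA : IsUDA κB k β) :
    IsUDA (Sum.elim κA κB) k (tensProd (pureState ψ) β) := by
  intro σ hσ hmarg
  set e := idxSumEquiv (κ₁ := κA) (κ₂ := κB)
  have htrα : (pureState ψ).trace = 1 := hψ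
  have hA : traceRight (reindex e e σ) = pureState ψ :=
    hαUDA _ (hσ.reindex e).traceRight fun S hS => by
      rw [ptrace_traceRight_reindex, hmarg _ (by rwa [Finset.card_map]),
        ← ptrace_traceRight_reindex, reindex_tensProd, traceRight_kronecker, hβ.2, one_smul]
  have hB : traceLeft (reindex e e σ) = β :=
    hβUDA _ (hσ.reindex e).traceLeft fun T hT => by
      rw [ptrace_traceLeft_reindex, hmarg _ (by rwa [Finset.card_map]),
        ← ptrace_traceLeft_reindex, reindex_tensProd, traceLeft_kronecker, htrα, one_smul]
  apply (reindex e e).injective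
  rw [reindex_tensProd, ← hB]
  exact PosSemidef.eq_vecMulVec_kronecker_traceLeft (hσ.reindex e).1 hψ hA
end

section
/- Suppose ρ and σ are density operators on ⊗_{i=1}^n H_{A_i} and ⊗_{i=1}^n H_{B_i} respectively, both k-UDA, and let α be a density operator on the n-partite space ⊗_{i=1}^n (H_{A_i} ⊗ H_{B_i}) sharing all k-partite marginals (over the combined parties) with ρ ⊗_K σ. Then the full A-side marginal of α equals ρ and the full B-side marginal of α equals σ: tr_{B_{[n]}}(α) = ρ and tr_{A_{[n]}}(α) = σ. -/
open scoped BigOperators ComplexOrder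

def kronProd {ι : Type} {κA κB : ι → Type}
    (ρ : Matrix (Idx κA) (Idx κA) ℂ) (σ : Matrix (Idx κB) (Idx κB) ℂ) :
    Matrix (Idx fun i => κA i × κB i) (Idx fun i => κA i × κB i) ℂ :=
  fun a b => ρ (fun i => (a i).1) (fun i => (b i).1) *
             σ (fun i => (a i).2) (fun i => (b i).2)

noncomputable def trBside {ι : Type} [Fintype ι] [DecidableEq ι] {κA κB : ι → Type}
    [∀ i, Fintype (κB i)]
    (M : Matrix (Idx fun i => κA i × κB i) (Idx fun i => κA i × κB i) ℂ) :
    Matrix (Idx κA) (Idx κA) ℂ :=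
  fun a b => ∑ c : Idx κB, M (fun i => (a i, c i)) (fun i => (b i, c i))

noncomputable def trAside {ι : Type} [Fintype ι] [DecidableEq ι] {κA κB : ι → Type}
    [∀ i, Fintype (κA i)]
    (M : Matrix (Idx fun i => κA i × κB i) (Idx fun i => κA i × κB i) ℂ) :
    Matrix (Idx κB) (Idx κB) ℂ :=
  fun a b => ∑ c : Idx κA, M (fun i => (c i, a i)) (fun i => (c i, b i))

namespace KCF
variable {ι : Type} [Fintype ι] [DecidableEq ι]

def pairEquiv (κA κB : ι → Type) : (Idx fun i => κA i × κB i) ≃ (Idx κA × Idx κB) where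
  toFun p := (fun i => (p i).1, fun i => (p i).2)
  invFun q i := (q.1 i, q.2 i)
  left_inv _ := rfl
  right_inv _ := rfl

def splitEquiv (κ : ι → Type) (S : Finset ι) :
    (∀ i, κ i) ≃ ((∀ i : {i // i ∈ S}, κ i.1) × (∀ i : {i // i ∉ S}, κ i.1)) where
  toFun f := (fun i => f i.1, fun i => f i.1)
  invFun p i := if h : i ∈ S then p.1 ⟨i, h⟩ else p.2 ⟨i, h⟩
  left_inv f := funext fun i => by dsimp; split <;> rfl
  right_inv p := Prod.ext (funext fun i => dif_pos i.2) (funext fun i => dif_neg i.2)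

def phiEquiv (κA κB : ι → Type) (S : Finset ι) :
    ((∀ i : {i // i ∉ S}, κA i.1) × Idx κB) ≃
      ((∀ i : {i // i ∈ S}, κB i.1) × (∀ i : {i // i ∉ S}, κA i.1 × κB i.1)) where
  toFun p := (fun i => p.2 i.1, fun i => (p.1 i, p.2 i.1))
  invFun q := (fun i => (q.2 i).1, fun i => if h : i ∈ S then q.1 ⟨i, h⟩ else (q.2 ⟨i, h⟩).2)
  left_inv p := Prod.ext rfl (funext fun i => by dsimp; split <;> rfl)
  right_inv q := Prod.ext (funext fun i => dif_pos i.2)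
    (funext fun i => by dsimp; rw [dif_neg i.2])

def phiEquivA (κA κB : ι → Type) (S : Finset ι) :
    ((∀ i : {i // i ∉ S}, κB i.1) × Idx κA) ≃
      ((∀ i : {i // i ∈ S}, κA i.1) × (∀ i : {i // i ∉ S}, κA i.1 × κB i.1)) where
  toFun p := (fun i => p.2 i.1, fun i => (p.2 i.1, p.1 i))
  invFun q := (fun i => (q.2 i).2, fun i => if h : i ∈ S then q.1 ⟨i, h⟩ else (q.2 ⟨i, h⟩).1)
  left_inv p := Prod.ext rfl (funext fun i => by dsimp; split <;> rfl)
  right_inv q := Prod.ext (funext fun i => dif_pos i.2)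
    (funext fun i => by dsimp; rw [dif_neg i.2])

lemma posSemidef_sum {m γ : Type} [Fintype m] (s : Finset γ) (f : γ → Matrix m m ℂ)
    (h : ∀ i ∈ s, (f i).PosSemidef) : (∑ i ∈ s, f i).PosSemidef :=
  Finset.sum_induction f _ (fun _ _ ha hb => ha.add hb) Matrix.PosSemidef.zero h

variable {κA κB : ι → Type} [∀ i, Fintype (κA i)] [∀ i, Fintype (κB i)]

lemma trBside_eq_sum (M : Matrix (Idx fun i => κA i × κB i) (Idx fun i => κA i × κB i) ℂ) :
    trBside M = ∑ c : Idx κB,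
      M.submatrix (fun a i => (a i, c i)) (fun a i => (a i, c i)) := by
  ext a b
  simp [trBside, Matrix.sum_apply, Matrix.submatrix]

lemma trAside_eq_sum (M : Matrix (Idx fun i => κA i × κB i) (Idx fun i => κA i × κB i) ℂ) :
    trAside M = ∑ c : Idx κA,
      M.submatrix (fun a i => (c i, a i)) (fun a i => (c i, a i)) := by
  ext a b
  simp [trAside, Matrix.sum_apply, Matrix.submatrix]

lemma trBside_posSemidef {M : Matrix (Idx fun i => κA i × κB i) (Idx fun i => κA i × κB i) ℂ}
    (hM : M.PosSemidef) : (trBside M).PosSemidef := by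
  rw [trBside_eq_sum]
  exact posSemidef_sum _ _ fun c _ => hM.submatrix _

lemma trAside_posSemidef {M : Matrix (Idx fun i => κA i × κB i) (Idx fun i => κA i × κB i) ℂ}
    (hM : M.PosSemidef) : (trAside M).PosSemidef := by
  rw [trAside_eq_sum]
  exact posSemidef_sum _ _ fun c _ => hM.submatrix _

lemma trBside_trace (M : Matrix (Idx fun i => κA i × κB i) (Idx fun i => κA i × κB i) ℂ) :
    (trBside M).trace = M.trace := by
  simp only [Matrix.trace, Matrix.diag, trBside]
  rw [← Finset.sum_product', Finset.univ_product_univ]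
  exact Fintype.sum_bijective (pairEquiv κA κB).symm (Equiv.bijective _) _ _ fun q => rfl

lemma trAside_trace (M : Matrix (Idx fun i => κA i × κB i) (Idx fun i => κA i × κB i) ℂ) :
    (trAside M).trace = M.trace := by
  simp only [Matrix.trace, Matrix.diag, trAside]
  rw [← Finset.sum_product', Finset.univ_product_univ]
  exact Fintype.sum_bijective ((Equiv.prodComm _ _).trans (pairEquiv κA κB).symm)
    (Equiv.bijective _) _ _ fun q => rfl

lemma trBside_isDensity {M : Matrix (Idx fun i => κA i × κB i) (Idx fun i => κA i × κB i) ℂ}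
    (hM : IsDensity M) : IsDensity (trBside M) :=
  ⟨trBside_posSemidef hM.1, by rw [trBside_trace]; exact hM.2⟩

lemma trAside_isDensity {M : Matrix (Idx fun i => κA i × κB i) (Idx fun i => κA i × κB i) ℂ}
    (hM : IsDensity M) : IsDensity (trAside M) :=
  ⟨trAside_posSemidef hM.1, by rw [trAside_trace]; exact hM.2⟩

lemma ptrace_trBside (S : Finset ι)
    (M : Matrix (Idx fun i => κA i × κB i) (Idx fun i => κA i × κB i) ℂ)
    (a b : ∀ i : {i // i ∈ S}, κA i.1) :
    ptrace κA S (trBside M) a b = ∑ sB : ∀ i : {i // i ∈ S}, κB i.1,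
      ptrace (fun i => κA i × κB i) S M
        (fun i => (a i, sB i)) (fun i => (b i, sB i)) := by
  simp only [ptrace, trBside]
  rw [← Finset.sum_product', Finset.univ_product_univ]
  refine Eq.symm ?_
  rw [← Finset.sum_product', Finset.univ_product_univ]
  refine Fintype.sum_equiv (phiEquiv κA κB S).symm _ _ fun p => ?_
  congr 1 <;> · funext i; by_cases h : i ∈ S <;> simp [h, phiEquiv]

lemma ptrace_trAside (S : Finset ι)
    (M : Matrix (Idx fun i => κA i × κB i) (Idx fun i => κA i × κB i) ℂ)
    (a b : ∀ i : {i // i ∈ S}, κB i.1) :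
    ptrace κB S (trAside M) a b = ∑ sA : ∀ i : {i // i ∈ S}, κA i.1,
      ptrace (fun i => κA i × κB i) S M
        (fun i => (sA i, a i)) (fun i => (sA i, b i)) := by
  simp only [ptrace, trAside]
  rw [← Finset.sum_product', Finset.univ_product_univ]
  refine Eq.symm ?_
  rw [← Finset.sum_product', Finset.univ_product_univ]
  refine Fintype.sum_equiv (phiEquivA κA κB S).symm _ _ fun p => ?_
  congr 1 <;> · funext i; by_cases h : i ∈ S <;> simp [h, phiEquivA]

lemma kron_marg_B (S : Finset ι)
    (ρ : Matrix (Idx κA) (Idx κA) ℂ) (σ : Matrix (Idx κB) (Idx κB) ℂ)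
    (a b : ∀ i : {i // i ∈ S}, κA i.1) :
    (∑ sB : ∀ i : {i // i ∈ S}, κB i.1,
      ptrace (fun i => κA i × κB i) S (kronProd ρ σ)
        (fun i => (a i, sB i)) (fun i => (b i, sB i)))
      = ptrace κA S ρ a b * σ.trace := by
  simp only [ptrace, kronProd]
  have key : ∀ (sB : ∀ i : {i // i ∈ S}, κB i.1) (e : ∀ i : {i // i ∉ S}, κA i.1 × κB i.1)
      (x : ∀ i : {i // i ∈ S}, κA i.1),
      (fun i => ((if h : i ∈ S then (x ⟨i, h⟩, sB ⟨i, h⟩) else e ⟨i, h⟩) : κA i × κB i).1)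
        = (fun i => if h : i ∈ S then x ⟨i, h⟩ else (e ⟨i, h⟩).1) ∧
      (fun i => ((if h : i ∈ S then (x ⟨i, h⟩, sB ⟨i, h⟩) else e ⟨i, h⟩) : κA i × κB i).2)
        = (fun i => if h : i ∈ S then sB ⟨i, h⟩ else (e ⟨i, h⟩).2) := by
    intro sB e x
    constructor <;> · funext i; by_cases h : i ∈ S <;> simp [h]
  calc (∑ sB : ∀ i : {i // i ∈ S}, κB i.1, ∑ e : ∀ i : {i // i ∉ S}, κA i.1 × κB i.1,
        ρ (fun i => ((if h : i ∈ S then (a ⟨i, h⟩, sB ⟨i, h⟩) else e ⟨i, h⟩) : κA i × κB i).1)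
          (fun i => ((if h : i ∈ S then (b ⟨i, h⟩, sB ⟨i, h⟩) else e ⟨i, h⟩) : κA i × κB i).1) *
        σ (fun i => ((if h : i ∈ S then (a ⟨i, h⟩, sB ⟨i, h⟩) else e ⟨i, h⟩) : κA i × κB i).2)
          (fun i => ((if h : i ∈ S then (b ⟨i, h⟩, sB ⟨i, h⟩) else e ⟨i, h⟩) : κA i × κB i).2))
      = ∑ sB : ∀ i : {i // i ∈ S}, κB i.1, ∑ e : ∀ i : {i // i ∉ S}, κA i.1 × κB i.1,
        ρ (fun i => if h : i ∈ S then a ⟨i, h⟩ else (e ⟨i, h⟩).1)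
          (fun i => if h : i ∈ S then b ⟨i, h⟩ else (e ⟨i, h⟩).1) *
        σ (fun i => if h : i ∈ S then sB ⟨i, h⟩ else (e ⟨i, h⟩).2)
          (fun i => if h : i ∈ S then sB ⟨i, h⟩ else (e ⟨i, h⟩).2) := by
        refine Finset.sum_congr rfl fun sB _ => Finset.sum_congr rfl fun e _ => ?_
        rw [(key sB e a).1, (key sB e b).1, (key sB e a).2, (key sB e b).2]
    _ = ∑ sB : ∀ i : {i // i ∈ S}, κB i.1,
        ∑ q : (∀ i : {i // i ∉ S}, κA i.1) × (∀ i : {i // i ∉ S}, κB i.1),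
        ρ (fun i => if h : i ∈ S then a ⟨i, h⟩ else q.1 ⟨i, h⟩)
          (fun i => if h : i ∈ S then b ⟨i, h⟩ else q.1 ⟨i, h⟩) *
        σ (fun i => if h : i ∈ S then sB ⟨i, h⟩ else q.2 ⟨i, h⟩)
          (fun i => if h : i ∈ S then sB ⟨i, h⟩ else q.2 ⟨i, h⟩) := by
        refine Finset.sum_congr rfl fun sB _ => ?_
        exact Fintype.sum_equiv (pairEquiv (fun i : {i // i ∉ S} => κA i.1)
          (fun i : {i // i ∉ S} => κB i.1)) _ _ fun e => rfl
    _ = ptrace κA S ρ a b * σ.trace := by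
        have hσtr : (∑ sB : ∀ i : {i // i ∈ S}, κB i.1, ∑ qB : ∀ i : {i // i ∉ S}, κB i.1,
            σ (fun i => if h : i ∈ S then sB ⟨i, h⟩ else qB ⟨i, h⟩)
              (fun i => if h : i ∈ S then sB ⟨i, h⟩ else qB ⟨i, h⟩)) = σ.trace := by
          rw [← Finset.sum_product', Finset.univ_product_univ]
          exact Fintype.sum_bijective (splitEquiv κB S).symm (Equiv.bijective _) _ _
            fun q => rfl
        simp only [Fintype.sum_prod_type]
        rw [Finset.sum_comm]
        simp_rw [← Finset.mul_sum]
        rw [← Finset.sum_mul]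
        exact congrArg₂ (· * ·) rfl hσtr
lemma kron_marg_A (S : Finset ι)
    (ρ : Matrix (Idx κA) (Idx κA) ℂ) (σ : Matrix (Idx κB) (Idx κB) ℂ)
    (a b : ∀ i : {i // i ∈ S}, κB i.1) :
    (∑ sA : ∀ i : {i // i ∈ S}, κA i.1,
      ptrace (fun i => κA i × κB i) S (kronProd ρ σ)
        (fun i => (sA i, a i)) (fun i => (sA i, b i)))
      = ρ.trace * ptrace κB S σ a b := by
  simp only [ptrace, kronProd]
  have key : ∀ (sA : ∀ i : {i // i ∈ S}, κA i.1) (e : ∀ i : {i // i ∉ S}, κA i.1 × κB i.1)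
      (x : ∀ i : {i // i ∈ S}, κB i.1),
      (fun i => ((if h : i ∈ S then (sA ⟨i, h⟩, x ⟨i, h⟩) else e ⟨i, h⟩) : κA i × κB i).1)
        = (fun i => if h : i ∈ S then sA ⟨i, h⟩ else (e ⟨i, h⟩).1) ∧
      (fun i => ((if h : i ∈ S then (sA ⟨i, h⟩, x ⟨i, h⟩) else e ⟨i, h⟩) : κA i × κB i).2)
        = (fun i => if h : i ∈ S then x ⟨i, h⟩ else (e ⟨i, h⟩).2) := by
    intro sA e x
    constructor <;> · funext i; by_cases h : i ∈ S <;> simp [h]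
  calc (∑ sA : ∀ i : {i // i ∈ S}, κA i.1, ∑ e : ∀ i : {i // i ∉ S}, κA i.1 × κB i.1,
        ρ (fun i => ((if h : i ∈ S then (sA ⟨i, h⟩, a ⟨i, h⟩) else e ⟨i, h⟩) : κA i × κB i).1)
          (fun i => ((if h : i ∈ S then (sA ⟨i, h⟩, b ⟨i, h⟩) else e ⟨i, h⟩) : κA i × κB i).1) *
        σ (fun i => ((if h : i ∈ S then (sA ⟨i, h⟩, a ⟨i, h⟩) else e ⟨i, h⟩) : κA i × κB i).2)
          (fun i => ((if h : i ∈ S then (sA ⟨i, h⟩, b ⟨i, h⟩) else e ⟨i, h⟩) : κA i × κB i).2))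
      = ∑ sA : ∀ i : {i // i ∈ S}, κA i.1, ∑ e : ∀ i : {i // i ∉ S}, κA i.1 × κB i.1,
        ρ (fun i => if h : i ∈ S then sA ⟨i, h⟩ else (e ⟨i, h⟩).1)
          (fun i => if h : i ∈ S then sA ⟨i, h⟩ else (e ⟨i, h⟩).1) *
        σ (fun i => if h : i ∈ S then a ⟨i, h⟩ else (e ⟨i, h⟩).2)
          (fun i => if h : i ∈ S then b ⟨i, h⟩ else (e ⟨i, h⟩).2) := by
        refine Finset.sum_congr rfl fun sA _ => Finset.sum_congr rfl fun e _ => ?_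
        rw [(key sA e a).1, (key sA e b).1, (key sA e a).2, (key sA e b).2]
    _ = ∑ sA : ∀ i : {i // i ∈ S}, κA i.1,
        ∑ q : (∀ i : {i // i ∉ S}, κA i.1) × (∀ i : {i // i ∉ S}, κB i.1),
        ρ (fun i => if h : i ∈ S then sA ⟨i, h⟩ else q.1 ⟨i, h⟩)
          (fun i => if h : i ∈ S then sA ⟨i, h⟩ else q.1 ⟨i, h⟩) *
        σ (fun i => if h : i ∈ S then a ⟨i, h⟩ else q.2 ⟨i, h⟩)
          (fun i => if h : i ∈ S then b ⟨i, h⟩ else q.2 ⟨i, h⟩) := by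
        refine Finset.sum_congr rfl fun sA _ => ?_
        exact Fintype.sum_equiv (pairEquiv (fun i : {i // i ∉ S} => κA i.1)
          (fun i : {i // i ∉ S} => κB i.1)) _ _ fun e => rfl
    _ = ρ.trace * ptrace κB S σ a b := by
        have hρtr : (∑ sA : ∀ i : {i // i ∈ S}, κA i.1, ∑ qA : ∀ i : {i // i ∉ S}, κA i.1,
            ρ (fun i => if h : i ∈ S then sA ⟨i, h⟩ else qA ⟨i, h⟩)
              (fun i => if h : i ∈ S then sA ⟨i, h⟩ else qA ⟨i, h⟩)) = ρ.trace := by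
          rw [← Finset.sum_product', Finset.univ_product_univ]
          exact Fintype.sum_bijective (splitEquiv κA S).symm (Equiv.bijective _) _ _
            fun q => rfl
        simp only [Fintype.sum_prod_type]
        simp_rw [← Finset.mul_sum, ← Finset.sum_mul]
        exact congrArg₂ (· * ·) hρtr rfl

end KCF

theorem kronecker_compatible_full_marginals {n : ℕ}
    (κA κB : Fin n → Type) [∀ i, Fintype (κA i)] [∀ i, Fintype (κB i)] (k : ℕ)
    (ρ : Matrix (Idx κA) (Idx κA) ℂ) (hρ : IsDensity ρ) (hρUDA : IsUDA κA k ρ)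
    (σ : Matrix (Idx κB) (Idx κB) ℂ) (hσ : IsDensity σ) (hσUDA : IsUDA κB k σ)
    (α : Matrix (Idx fun i => κA i × κB i) (Idx fun i => κA i × κB i) ℂ)
    (hα : IsDensity α)
    (hcompat : ∀ S : Finset (Fin n), S.card = k →
      ptrace (fun i => κA i × κB i) S α =
      ptrace (fun i => κA i × κB i) S (kronProd ρ σ)) :
    trBside α = ρ ∧ trAside α = σ := by
  constructor
  · refine hρUDA _ (KCF.trBside_isDensity hα) fun S hS => ?_
    funext a b
    rw [KCF.ptrace_trBside, hcompat S hS, KCF.kron_marg_B, hσ.2, mul_one]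
  · refine hσUDA _ (KCF.trAside_isDensity hα) fun S hS => ?_
    funext a b
    rw [KCF.ptrace_trAside, hcompat S hS, KCF.kron_marg_A, hρ.2, one_mul]
end
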